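/- arXiv:2004.01918 — 3 statements merged into one kernel-verified Lean document; each statement's English description precedes it below -/
import Mathlib

section
/- If f₁ : (0,∞) → (0,∞) is operator monotone and operator convex, and f₂ is operator geodesically convex, then f₁ ∘ f₂ is operator geodesically convex: for positive definite matrices A, B and v ∈ [0,1], (f₁ ∘ f₂)(A #_v B) ≤ (1-v)·(f₁ ∘ f₂)(A) + v·(f₁ ∘ f₂)(B) in the Loewner order. -/
open scoped Matrix

/-- Weighted matrix geometric mean `A #_v B = A^(1/2) (A^(-1/2) B A^(-1/2))^v A^(1/2)`,
where real powers are taken via the continuous functional calculus. -/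
noncomputable def mpow {m : ℕ} (A : Matrix (Fin m) (Fin m) ℝ) (r : ℝ) :
    Matrix (Fin m) (Fin m) ℝ :=
  cfc (fun x : ℝ => x ^ r) A

noncomputable def geomMean {m : ℕ} (v : ℝ) (A B : Matrix (Fin m) (Fin m) ℝ) :
    Matrix (Fin m) (Fin m) ℝ :=
  mpow A (1/2) * mpow (mpow A (-(1/2)) * B * mpow A (-(1/2))) v * mpow A (1/2)

/-! `f₂ (A #_v B) ≤ (1 - v) f₂ A + v f₂ B` is an inequality between positive
definite matrices, so monotonicity of `f₁` preserves it, and operator convexity of `f₁` then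
bounds `f₁ ((1 - v) f₂ A + v f₂ B)` by `(1 - v) f₁ (f₂ A) + v f₁ (f₂ B)`. -/

open scoped MatrixOrder

namespace Matrix

variable {n : Type*} [Fintype n] [DecidableEq n]

lemma IsHermitian.cfc_comp {A : Matrix n n ℝ} (hA : A.IsHermitian) (g f : ℝ → ℝ) :
    cfc (g ∘ f) A = cfc g (cfc f A) :=
  _root_.cfc_comp g f A hA ((A.finite_real_spectrum.image f).continuousOn g)
    (A.finite_real_spectrum.continuousOn f)

lemma PosDef.cfc_of_pos {f : ℝ → ℝ} (hf : ∀ x, 0 < x → 0 < f x) {A : Matrix n n ℝ}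
    (hA : A.PosDef) : (cfc f A).PosDef :=
  have hspec :=
    (StarOrderedRing.isStrictlyPositive_iff_spectrum_pos A hA.1).mp hA.isStrictlyPositive
  isStrictlyPositive_iff_posDef.mp <|
    (cfc_isStrictlyPositive_iff f A (A.finite_real_spectrum.continuousOn f) hA.1).mpr
      fun x hx => hf x (hspec x hx)

lemma PosDef.mul_mul_same_of_isHermitian {A P : Matrix n n ℝ} (hA : A.PosDef)
    (hP : P.IsHermitian) (hPu : IsUnit P) : (P * A * P).PosDef := by
  simpa only [hP.eq] using hA.mul_mul_conjTranspose_same (vecMul_injective_iff_isUnit.mpr hPu)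

end Matrix

lemma Matrix.PosDef.mpow {m : ℕ} {A : Matrix (Fin m) (Fin m) ℝ} (hA : A.PosDef) (r : ℝ) :
    (mpow A r).PosDef :=
  hA.cfc_of_pos fun _ hx => Real.rpow_pos_of_pos hx r

lemma Matrix.PosDef.geomMean {m : ℕ} {A B : Matrix (Fin m) (Fin m) ℝ} (hA : A.PosDef)
    (hB : B.PosDef) (v : ℝ) : (geomMean v A B).PosDef :=
  have hsqrt := hA.mpow (1 / 2)
  have hinvSqrt := hA.mpow (-(1 / 2))
  ((hB.mul_mul_same_of_isHermitian hinvSqrt.1 hinvSqrt.isUnit).mpow v).mul_mul_same_of_isHermitian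
    hsqrt.1 hsqrt.isUnit

theorem comp_operatorGeodesicallyConvex_general (f₁ f₂ : ℝ → ℝ)
    (hf₂pos : ∀ x : ℝ, 0 < x → 0 < f₂ x)
    (hf₁mono : ∀ (m : ℕ) (A B : Matrix (Fin m) (Fin m) ℝ), A.PosDef → B.PosDef →
      (B - A).PosSemidef → (cfc f₁ B - cfc f₁ A).PosSemidef)
    (hf₁conv : ∀ (m : ℕ) (A B : Matrix (Fin m) (Fin m) ℝ), A.PosDef → B.PosDef →
      ∀ v : ℝ, v ∈ Set.Icc (0 : ℝ) 1 →
      ((1 - v) • cfc f₁ A + v • cfc f₁ B - cfc f₁ ((1 - v) • A + v • B)).PosSemidef)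
    (hf₂gc : ∀ (m : ℕ) (A B : Matrix (Fin m) (Fin m) ℝ), A.PosDef → B.PosDef →
      ∀ v : ℝ, v ∈ Set.Icc (0 : ℝ) 1 →
      ((1 - v) • cfc f₂ A + v • cfc f₂ B - cfc f₂ (geomMean v A B)).PosSemidef) :
    ∀ (m : ℕ) (A B : Matrix (Fin m) (Fin m) ℝ), A.PosDef → B.PosDef →
      ∀ v : ℝ, v ∈ Set.Icc (0 : ℝ) 1 →
      ((1 - v) • cfc (f₁ ∘ f₂) A + v • cfc (f₁ ∘ f₂) B
        - cfc (f₁ ∘ f₂) (geomMean v A B)).PosSemidef := by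
  intro m A B hA hB v hv
  have hG := hA.geomMean hB v
  have hf₂G : (cfc f₂ (geomMean v A B)).PosDef := hG.cfc_of_pos hf₂pos
  have hf₂_le : cfc f₂ (geomMean v A B) ≤ (1 - v) • cfc f₂ A + v • cfc f₂ B :=
    hf₂gc m A B hA hB v hv
  have hmean : ((1 - v) • cfc f₂ A + v • cfc f₂ B).PosDef := by
    simpa only [add_sub_cancel] using hf₂G.add_posSemidef hf₂_le
  rw [← Matrix.le_iff, hA.1.cfc_comp, hB.1.cfc_comp, hG.1.cfc_comp]
  calc cfc f₁ (cfc f₂ (geomMean v A B))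
      ≤ cfc f₁ ((1 - v) • cfc f₂ A + v • cfc f₂ B) :=
        hf₁mono m _ _ hf₂G hmean hf₂_le
    _ ≤ (1 - v) • cfc f₁ (cfc f₂ A) + v • cfc f₁ (cfc f₂ B) :=
        hf₁conv m _ _ (hA.cfc_of_pos hf₂pos) (hB.cfc_of_pos hf₂pos) v hv

/-- If `f₁` is operator monotone and operator convex (mapping `(0,∞)` into `(0,∞)`) and `f₂`
is operator geodesically convex, then `f₁ ∘ f₂` is operator geodesically convex. -/
theorem comp_operatorGeodesicallyConvex (f₁ f₂ : ℝ → ℝ)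
    (hf₁pos : ∀ x : ℝ, 0 < x → 0 < f₁ x) (hf₂pos : ∀ x : ℝ, 0 < x → 0 < f₂ x)
    (hf₁mono : ∀ (m : ℕ) (A B : Matrix (Fin m) (Fin m) ℝ), A.PosDef → B.PosDef →
      (B - A).PosSemidef → (cfc f₁ B - cfc f₁ A).PosSemidef)
    (hf₁conv : ∀ (m : ℕ) (A B : Matrix (Fin m) (Fin m) ℝ), A.PosDef → B.PosDef →
      ∀ v : ℝ, v ∈ Set.Icc (0 : ℝ) 1 →
      ((1 - v) • cfc f₁ A + v • cfc f₁ B - cfc f₁ ((1 - v) • A + v • B)).PosSemidef)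
    (hf₂gc : ∀ (m : ℕ) (A B : Matrix (Fin m) (Fin m) ℝ), A.PosDef → B.PosDef →
      ∀ v : ℝ, v ∈ Set.Icc (0 : ℝ) 1 →
      ((1 - v) • cfc f₂ A + v • cfc f₂ B - cfc f₂ (geomMean v A B)).PosSemidef) :
    ∀ (m : ℕ) (A B : Matrix (Fin m) (Fin m) ℝ), A.PosDef → B.PosDef →
      ∀ v : ℝ, v ∈ Set.Icc (0 : ℝ) 1 →
      ((1 - v) • cfc (f₁ ∘ f₂) A + v • cfc (f₁ ∘ f₂) B
        - cfc (f₁ ∘ f₂) (geomMean v A B)).PosSemidef :=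
  comp_operatorGeodesicallyConvex_general f₁ f₂ hf₂pos hf₁mono hf₁conv hf₂gc
end

section
/- If g is an operator geodesically concave function with positive definite values, then its adjoint g*(t) = 1/g(1/t) is operator geodesically convex, and moreover satisfies the refinement g*(A #_v B) ≤ g*(A) !_v g*(B) ≤ (1-v)g*(A) + v g*(B), where X !_v Y = ((1-v)X^(-1) + vY^(-1))^(-1) is the weighted harmonic mean. -/
/-! Inversion commutes with the weighted geometric mean, `(A #_v B)⁻¹ = A⁻¹ #_v B⁻¹`, so geodesic
concavity of `g` at `A⁻¹, B⁻¹` reads `(1 - v) g(A⁻¹) + v g(B⁻¹) ≤ g((A #_v B)⁻¹)`. Inverting,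
which reverses the Loewner order on positive definite matrices, gives the first inequality; the
second is the operator convexity of `t ↦ t⁻¹`, i.e. the harmonic-arithmetic mean inequality. -/

open scoped Matrix

/-- Weighted matrix harmonic mean `X !_v Y = ((1-v) X⁻¹ + v Y⁻¹)⁻¹`. -/
noncomputable def harmMean {m : ℕ} (v : ℝ) (X Y : Matrix (Fin m) (Fin m) ℝ) :
    Matrix (Fin m) (Fin m) ℝ :=
  ((1 - v) • X⁻¹ + v • Y⁻¹)⁻¹

open scoped MatrixOrder ComplexOrder

namespace Matrix

variable {𝕜 n : Type*} [RCLike 𝕜] {P Q : Matrix n n 𝕜}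

theorem PosDef.of_le (hP : P.PosDef) (hPQ : P ≤ Q) : Q.PosDef := by
  simpa using hP.add_posSemidef hPQ

theorem PosDef.smul_add_smul (hP : P.PosDef) (hQ : Q.PosDef) {a b : ℝ} (ha : 0 ≤ a) (hb : 0 ≤ b)
    (hab : a + b = 1) : (a • P + b • Q).PosDef := by
  rcases ha.eq_or_lt with rfl | ha
  · simpa [show b = 1 by linarith] using hQ
  · exact (hP.smul ha).add_posSemidef (hQ.posSemidef.smul hb)

variable [Fintype n] [DecidableEq n]

theorem PosDef.mul_mul_of_posDef {X : Matrix n n 𝕜} (hP : P.PosDef) (hX : X.PosDef) :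
    (X * P * X).PosDef := by
  simpa only [hX.1.eq] using
    hP.conjTranspose_mul_mul_same (mulVec_injective_iff_isUnit.mpr hX.isUnit)

theorem PosDef.inv_le_inv (hP : P.PosDef) (hPQ : P ≤ Q) : Q⁻¹ ≤ P⁻¹ := by
  have hQ := hP.of_le hPQ
  let := hP.isUnit.invertible
  let := hQ.isUnit.invertible
  have key : P⁻¹ - Q⁻¹ = (P⁻¹ - Q⁻¹)ᴴ * P * (P⁻¹ - Q⁻¹) + (Q⁻¹)ᴴ * (Q - P) * Q⁻¹ := by
    rw [(hP.1.inv.sub hQ.1.inv).eq, hQ.1.inv.eq]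
    simp only [sub_mul, mul_sub, mul_assoc, mul_inv_of_invertible, inv_mul_of_invertible,
      mul_one, one_mul]
    abel
  rw [le_iff, key]
  exact (hP.posSemidef.conjTranspose_mul_mul_same _).add (hPQ.conjTranspose_mul_mul_same _)

theorem PosDef.inv_smul_add_smul_le (hP : P.PosDef) (hQ : Q.PosDef) {a b : ℝ} (ha : 0 ≤ a)
    (hb : 0 ≤ b) (hab : a + b = 1) : (a • P + b • Q)⁻¹ ≤ a • P⁻¹ + b • Q⁻¹ := by
  set S := a • P + b • Q with hS_def
  have hS : S.PosDef := hP.smul_add_smul hQ ha hb hab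
  let := hP.isUnit.invertible
  let := hQ.isUnit.invertible
  let := hS.isUnit.invertible
  have hSS : a • (S⁻¹ * (P * S⁻¹)) + b • (S⁻¹ * (Q * S⁻¹)) = S⁻¹ := by
    calc _ = S⁻¹ * (S * S⁻¹) := by
          simp only [hS_def, add_mul, mul_add, smul_mul_assoc, mul_smul_comm]
      _ = S⁻¹ := by rw [mul_inv_of_invertible, mul_one]
  obtain rfl : b = 1 - a := eq_sub_of_add_eq' hab
  have key : a • P⁻¹ + (1 - a) • Q⁻¹ - S⁻¹ = a • ((P⁻¹ - S⁻¹)ᴴ * P * (P⁻¹ - S⁻¹))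
      + (1 - a) • ((Q⁻¹ - S⁻¹)ᴴ * Q * (Q⁻¹ - S⁻¹)) := by
    rw [(hP.1.inv.sub hS.1.inv).eq, (hQ.1.inv.sub hS.1.inv).eq]
    simp only [sub_mul, mul_sub, mul_assoc, mul_inv_of_invertible, inv_mul_of_invertible,
      mul_one, one_mul]
    linear_combination (norm := module) -hSS
  rw [le_iff, key]
  exact ((hP.posSemidef.conjTranspose_mul_mul_same _).smul ha).add
    ((hQ.posSemidef.conjTranspose_mul_mul_same _).smul hb)

theorem IsHermitian.posDef_cfc {A : Matrix n n 𝕜} (hA : A.IsHermitian) {f : ℝ → ℝ}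
    (hf : ∀ x ∈ spectrum ℝ A, 0 < f x) : (cfc f A).PosDef :=
  isStrictlyPositive_iff_posDef.mp <|
    (cfc_isStrictlyPositive_iff f A (A.finite_real_spectrum.continuousOn f) hA).mpr hf

theorem PosDef.pos_of_mem_spectrum {A : Matrix n n 𝕜} (hA : A.PosDef) {x : ℝ}
    (hx : x ∈ spectrum ℝ A) : 0 < x :=
  hA.isStrictlyPositive.spectrum_pos hx

end Matrix

section GeometricMean

variable {m : ℕ} {A B : Matrix (Fin m) (Fin m) ℝ}

theorem mpow_posDef (hA : A.PosDef) (r : ℝ) : (mpow A r).PosDef :=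
  hA.1.posDef_cfc fun _ hx => Real.rpow_pos_of_pos (hA.pos_of_mem_spectrum hx) r

theorem mpow_add (hA : A.PosDef) (r s : ℝ) : mpow A (r + s) = mpow A r * mpow A s := by
  rw [mpow, mpow, mpow, ← cfc_mul _ _ A (A.finite_real_spectrum.continuousOn _)
    (A.finite_real_spectrum.continuousOn _)]
  exact cfc_congr fun x hx => Real.rpow_add (hA.pos_of_mem_spectrum hx) r s

theorem mpow_zero (hA : A.IsHermitian) : mpow A 0 = 1 := by
  simp only [mpow, Real.rpow_zero]
  exact cfc_const_one ℝ A hA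

theorem inv_mpow (hA : A.PosDef) (r : ℝ) : (mpow A r)⁻¹ = mpow A (-r) :=
  Matrix.inv_eq_left_inv <| by rw [← mpow_add hA, neg_add_cancel, mpow_zero hA.1]

theorem mpow_inv (hA : A.PosDef) (r : ℝ) : mpow A⁻¹ r = mpow A (-r) := by
  have hAu : A⁻¹ = ↑hA.isUnit.unit⁻¹ := by rw [Matrix.coe_units_inv, IsUnit.unit_spec]
  have h := cfc_comp_inv (R := ℝ) (fun x : ℝ => x ^ r) hA.isUnit.unit
    ((A.finite_real_spectrum.image _).continuousOn _) hA.1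
  rw [mpow, mpow, hAu, ← h]
  refine cfc_congr fun x hx => ?_
  simp only [Real.inv_rpow (hA.pos_of_mem_spectrum hx).le,
    Real.rpow_neg (hA.pos_of_mem_spectrum hx).le]

theorem geomMean_inv (hA : A.PosDef) (hB : B.PosDef) (v : ℝ) :
    (geomMean v A B)⁻¹ = geomMean v A⁻¹ B⁻¹ := by
  set C := mpow A (-(1/2)) * B * mpow A (-(1/2))
  have hC : C.PosDef := hB.mul_mul_of_posDef (mpow_posDef hA _)
  have hC_inv : C⁻¹ = mpow A (1/2) * B⁻¹ * mpow A (1/2) := by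
    rw [Matrix.mul_inv_rev, Matrix.mul_inv_rev, inv_mpow hA, neg_neg, mul_assoc]
  rw [geomMean, geomMean, Matrix.mul_inv_rev, Matrix.mul_inv_rev, inv_mpow hA, inv_mpow hC,
    mpow_inv hA, mpow_inv hA, neg_neg, ← mpow_inv hC, hC_inv, mul_assoc, mul_assoc]

end GeometricMean

theorem harmMean_inv_inv {m : ℕ} {X Y : Matrix (Fin m) (Fin m) ℝ} (hX : IsUnit X.det)
    (hY : IsUnit Y.det) (v : ℝ) : harmMean v X⁻¹ Y⁻¹ = ((1 - v) • X + v • Y)⁻¹ := by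
  rw [harmMean, Matrix.nonsing_inv_nonsing_inv X hX, Matrix.nonsing_inv_nonsing_inv Y hY]

/-- The adjoint `g*(A) = (g(A⁻¹))⁻¹` of an operator geodesically concave function `g` is
operator geodesically convex, with the refinement
`g*(A #_v B) ≤ g*(A) !_v g*(B) ≤ (1-v) g*(A) + v g*(B)`. -/
theorem adjoint_operatorGeodesicallyConvex (g : ℝ → ℝ)
    (hgpos : ∀ (m : ℕ) (A : Matrix (Fin m) (Fin m) ℝ), A.PosDef → (cfc g A).PosDef)
    (hggc : ∀ (m : ℕ) (A B : Matrix (Fin m) (Fin m) ℝ), A.PosDef → B.PosDef →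
      ∀ v : ℝ, v ∈ Set.Icc (0 : ℝ) 1 →
      (cfc g (geomMean v A B) - ((1 - v) • cfc g A + v • cfc g B)).PosSemidef) :
    ∀ (m : ℕ) (A B : Matrix (Fin m) (Fin m) ℝ), A.PosDef → B.PosDef →
      ∀ v : ℝ, v ∈ Set.Icc (0 : ℝ) 1 →
      (harmMean v (cfc g A⁻¹)⁻¹ (cfc g B⁻¹)⁻¹
          - (cfc g (geomMean v A B)⁻¹)⁻¹).PosSemidef ∧
      ((1 - v) • (cfc g A⁻¹)⁻¹ + v • (cfc g B⁻¹)⁻¹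
          - harmMean v (cfc g A⁻¹)⁻¹ (cfc g B⁻¹)⁻¹).PosSemidef := by
  intro m A B hA hB v hv
  have hgA : (cfc g A⁻¹).PosDef := hgpos m _ hA.inv
  have hgB : (cfc g B⁻¹).PosDef := hgpos m _ hB.inv
  have hconc : (1 - v) • cfc g A⁻¹ + v • cfc g B⁻¹ ≤ cfc g (geomMean v A B)⁻¹ := by
    rw [geomMean_inv hA hB]
    exact hggc m _ _ hA.inv hB.inv v hv
  have hw : 1 - v + v = 1 := sub_add_cancel 1 v
  rw [harmMean_inv_inv hgA.det_pos.ne'.isUnit hgB.det_pos.ne'.isUnit]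
  exact ⟨(hgA.smul_add_smul hgB (sub_nonneg.2 hv.2) hv.1 hw).inv_le_inv hconc,
    hgA.inv_smul_add_smul_le hgB (sub_nonneg.2 hv.2) hv.1 hw⟩
end

section
/- Operator Aczél inequality: let p, q > 1 with 1/p + 1/q = 1, and let A, B be commuting positive definite operators with spectra in (0,1). Then for every unit vector x, 1 - ‖(AB)^(1/2) x‖² ≥ (1 - ‖A^(p/2) x‖²)^(1/p) · (1 - ‖B^(q/2) x‖²)^(1/q). -/
/-!
Write `a = ⟨A^p x, x⟩`, `b = ⟨B^q x, x⟩` and `c = ⟨AB x, x⟩`, so that the three squared norms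
are `a`, `b`, `c`. Since `A` and `B` commute, Young's inequality `st ≤ s^p/p + t^q/q` lifts to
`AB ≤ A^p/p + B^q/q`: splitting along the spectral projections `P_s` of `A` turns the difference
into `∑ P_s f_s(B)` with each `f_s(t) = s^p/p + t^q/q - st ≥ 0` on the spectrum of `B`. Hence
`c ≤ a/p + b/q`, and since `A, B ≤ 1` give `a, b ≤ 1`, weighted AM-GM yields
`(1-a)^(1/p) (1-b)^(1/q) ≤ (1-a)/p + (1-b)/q = 1 - (a/p + b/q) ≤ 1 - c`.
-/

open scoped Matrix

open scoped MatrixOrder ComplexOrder InnerProductSpace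

theorem Real.one_sub_rpow_inv_mul_one_sub_rpow_inv_le {p q a b c : ℝ}
    (hpq : p.HolderConjugate q) (ha : a ≤ 1) (hb : b ≤ 1) (hc : c ≤ p⁻¹ * a + q⁻¹ * b) :
    (1 - a) ^ p⁻¹ * (1 - b) ^ q⁻¹ ≤ 1 - c :=
  calc (1 - a) ^ p⁻¹ * (1 - b) ^ q⁻¹ ≤ p⁻¹ * (1 - a) + q⁻¹ * (1 - b) :=
        geom_mean_le_arith_mean2_weighted hpq.inv_nonneg hpq.symm.inv_nonneg (by linarith)
          (by linarith) hpq.inv_add_inv_eq_one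
    _ = 1 - (p⁻¹ * a + q⁻¹ * b) := by linear_combination hpq.inv_add_inv_eq_one
    _ ≤ 1 - c := by linarith

namespace Matrix

section Commuting

variable {𝕜 n : Type*} [RCLike 𝕜] [Fintype n] [DecidableEq n]

theorem PosSemidef.mul_of_commute {A B : Matrix n n 𝕜} (hA : A.PosSemidef) (hB : B.PosSemidef)
    (hAB : Commute A B) : (A * B).PosSemidef := by
  set R := cfc Real.sqrt A
  have hR : IsSelfAdjoint R := cfc_predicate _ _
  have hRR : R * R = A := by
    rw [← cfc_mul _ _ A (A.finite_real_spectrum.continuousOn _)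
      (A.finite_real_spectrum.continuousOn _)]
    conv_rhs => rw [← cfc_id' ℝ A hA.isHermitian]
    exact cfc_congr fun t ht => Real.mul_self_sqrt (spectrum_nonneg_of_nonneg hA.nonneg ht)
  have hRB : Commute R B := hAB.cfc_real Real.sqrt
  have hconj : R * B * Rᴴ = A * B := by
    rw [← star_eq_conjTranspose, hR.star_eq, mul_assoc, ← hRB.eq, ← mul_assoc, hRR]
  exact hconj ▸ hB.mul_mul_conjTranspose_same R

noncomputable def spectralProjection (A : Matrix n n 𝕜) (s : ℝ) : Matrix n n 𝕜 :=
  cfc (fun t : ℝ => if t = s then (1 : ℝ) else 0) A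

theorem posSemidef_spectralProjection (A : Matrix n n 𝕜) (s : ℝ) :
    (spectralProjection A s).PosSemidef := by
  refine LE.le.posSemidef (cfc_nonneg fun t _ => ?_)
  split_ifs <;> norm_num

theorem sum_smul_spectralProjection (A : Matrix n n 𝕜) (f : ℝ → ℝ) :
    ∑ s ∈ A.finite_real_spectrum.toFinset, f s • spectralProjection A s = cfc f A := by
  have hc (g : ℝ → ℝ) := A.finite_real_spectrum.continuousOn g
  simp_rw [spectralProjection, ← cfc_smul _ _ A (hc _)]
  rw [← cfc_sum _ A _ fun s _ => hc _]
  refine cfc_congr fun t ht => ?_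
  rw [Finset.sum_apply,
    Finset.sum_eq_single_of_mem t (A.finite_real_spectrum.mem_toFinset.mpr ht)]
  · simp
  · intro s _ hst
    simp [Ne.symm hst]

theorem posSemidef_cfc_add_cfc_sub_mul {A B : Matrix n n 𝕜} (hA : A.IsHermitian)
    (hB : B.IsHermitian) (hAB : Commute A B) {φ ψ : ℝ → ℝ}
    (h : ∀ s ∈ spectrum ℝ A, ∀ t ∈ spectrum ℝ B, s * t ≤ φ s + ψ t) :
    (cfc φ A + cfc ψ B - A * B).PosSemidef := by
  have hc (g : ℝ → ℝ) := B.finite_real_spectrum.continuousOn g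
  have hA' : IsSelfAdjoint A := hA
  have hB' : IsSelfAdjoint B := hB
  set S := A.finite_real_spectrum.toFinset
  have hslice (s : ℝ) : cfc (fun t => φ s + ψ t - s * t) B = φ s • 1 + cfc ψ B - s • B := by
    rw [cfc_sub _ _ B (hc _) (hc _), cfc_add _ _ _ (hc _) (hc _), cfc_const (φ s) B hB',
      cfc_const_mul_id s B hB', Algebra.algebraMap_eq_smul_one]
  have hone : ∑ s ∈ S, spectralProjection A s = 1 := by
    simpa [cfc_const_one ℝ A hA'] using sum_smul_spectralProjection A fun _ => 1
  have hid : ∑ s ∈ S, s • spectralProjection A s = A :=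
    (sum_smul_spectralProjection A id).trans (cfc_id ℝ A hA')
  have hdecomp : cfc φ A + cfc ψ B - A * B =
      ∑ s ∈ S, spectralProjection A s * cfc (fun t => φ s + ψ t - s * t) B := by
    simp_rw [hslice, mul_sub, mul_add, mul_smul_comm, mul_one, Finset.sum_sub_distrib,
      Finset.sum_add_distrib, ← smul_mul_assoc]
    rw [sum_smul_spectralProjection, ← Finset.sum_mul, hone, ← Finset.sum_mul, hid, one_mul]
  rw [hdecomp]
  refine Finset.sum_induction _ PosSemidef (fun _ _ => PosSemidef.add) PosSemidef.zero
    fun s hs => (posSemidef_spectralProjection A s).mul_of_commute ?_ ?_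
  · refine LE.le.posSemidef (cfc_nonneg fun t ht => ?_)
    linarith [h s (A.finite_real_spectrum.mem_toFinset.mp hs) t ht]
  · exact ((hAB.cfc_real _).symm.cfc_real _).symm

end Commuting

section QuadraticForm

variable {n : Type*} [Fintype n] [DecidableEq n]

theorem inner_toEuclideanLin_le_of_le {M N : Matrix n n ℝ} (h : M ≤ N)
    (x : EuclideanSpace ℝ n) :
    ⟪toEuclideanLin M x, x⟫_ℝ ≤ ⟪toEuclideanLin N x, x⟫_ℝ := by
  simpa [inner_sub_left] using
    (isPositive_toEuclideanLin_iff.mpr (le_iff.mp h)).inner_nonneg_left x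

theorem IsHermitian.sq_norm_toEuclideanLin {N : Matrix n n ℝ} (hN : N.IsHermitian)
    (x : EuclideanSpace ℝ n) :
    ‖toEuclideanLin N x‖ ^ 2 = ⟪toEuclideanLin (N * N) x, x⟫_ℝ := by
  rw [← real_inner_self_eq_norm_sq, isSymmetric_toEuclideanLin_iff.mpr hN, toLpLin_mul_same,
    real_inner_comm]
  rfl

end QuadraticForm

section Power

variable {m : ℕ}

theorem isHermitian_mpow (M : Matrix (Fin m) (Fin m) ℝ) (r : ℝ) : (mpow M r).IsHermitian :=
  cfc_predicate _ M

theorem IsHermitian.mpow_one {M : Matrix (Fin m) (Fin m) ℝ} (hM : M.IsHermitian) :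
    mpow M 1 = M := by
  rw [mpow]
  simp only [Real.rpow_one]
  exact cfc_id' ℝ M hM

theorem PosSemidef.mpow_mul_mpow {M : Matrix (Fin m) (Fin m) ℝ} (hM : M.PosSemidef) {r s : ℝ}
    (hrs : r + s ≠ 0) : mpow M r * mpow M s = mpow M (r + s) := by
  have hc (f : ℝ → ℝ) := M.finite_real_spectrum.continuousOn f
  rw [mpow, mpow, ← cfc_mul _ _ M (hc _) (hc _)]
  exact cfc_congr fun t ht => (Real.rpow_add' (spectrum_nonneg_of_nonneg hM.nonneg ht) hrs).symm

theorem PosSemidef.sq_norm_toEuclideanLin_mpow_half {M : Matrix (Fin m) (Fin m) ℝ}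
    (hM : M.PosSemidef) {r : ℝ} (hr : r ≠ 0) (x : EuclideanSpace ℝ (Fin m)) :
    ‖toEuclideanLin (mpow M (r / 2)) x‖ ^ 2 = ⟪toEuclideanLin (mpow M r) x, x⟫_ℝ := by
  rw [(isHermitian_mpow M _).sq_norm_toEuclideanLin, hM.mpow_mul_mpow (by simpa using hr),
    add_halves]

theorem PosSemidef.mpow_le_one {M : Matrix (Fin m) (Fin m) ℝ} (hM : M.PosSemidef) (hM1 : M ≤ 1)
    {r : ℝ} (hr : 0 ≤ r) : mpow M r ≤ 1 := by
  have hM' : IsSelfAdjoint M := hM.isHermitian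
  refine cfc_le_one _ M fun t ht => Real.rpow_le_one (spectrum_nonneg_of_nonneg hM.nonneg ht) ?_ hr
  exact (CFC.le_one_iff M hM').mp hM1 t ht

theorem PosSemidef.young_inequality_of_commute {A B : Matrix (Fin m) (Fin m) ℝ}
    (hA : A.PosSemidef) (hB : B.PosSemidef) (hAB : Commute A B) {p q : ℝ}
    (hpq : p.HolderConjugate q) : A * B ≤ p⁻¹ • mpow A p + q⁻¹ • mpow B q := by
  have hscale {r : ℝ} (M : Matrix (Fin m) (Fin m) ℝ) :
      r⁻¹ • mpow M r = cfc (fun t : ℝ => t ^ r / r) M := by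
    simp_rw [div_eq_inv_mul]
    exact (cfc_const_mul _ _ M (M.finite_real_spectrum.continuousOn _)).symm
  rw [le_iff, hscale, hscale]
  exact posSemidef_cfc_add_cfc_sub_mul hA.isHermitian hB.isHermitian hAB fun s hs t ht =>
    Real.young_inequality_of_nonneg (spectrum_nonneg_of_nonneg hA.nonneg hs)
      (spectrum_nonneg_of_nonneg hB.nonneg ht) hpq

end Power

end Matrix

open Matrix in
theorem operatorAczel_general (p q : ℝ) (hp : 1 < p) (hpq : 1 / p + 1 / q = 1)
    {m : ℕ} (A B : Matrix (Fin m) (Fin m) ℝ) (hA : A.PosDef) (hB : B.PosDef)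
    (hcomm : A * B = B * A) (hA1 : (1 - A).PosDef) (hB1 : (1 - B).PosDef)
    (x : EuclideanSpace ℝ (Fin m)) (hx : ‖x‖ = 1) :
    (1 - ‖Matrix.toEuclideanLin (mpow A (p / 2)) x‖ ^ 2) ^ (1 / p) *
      (1 - ‖Matrix.toEuclideanLin (mpow B (q / 2)) x‖ ^ 2) ^ (1 / q) ≤
    1 - ‖Matrix.toEuclideanLin (mpow (A * B) (1 / 2)) x‖ ^ 2 := by
  have hpq' : p.HolderConjugate q :=
    Real.holderConjugate_iff.mpr ⟨hp, by simpa only [one_div] using hpq⟩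
  have hAB : (A * B).PosSemidef := hA.posSemidef.mul_of_commute hB.posSemidef hcomm
  have hx1 : ⟪toEuclideanLin 1 x, x⟫_ℝ = 1 := by simp [hx]
  rw [hA.posSemidef.sq_norm_toEuclideanLin_mpow_half hpq'.ne_zero,
    hB.posSemidef.sq_norm_toEuclideanLin_mpow_half hpq'.symm.ne_zero,
    hAB.sq_norm_toEuclideanLin_mpow_half one_ne_zero, hAB.isHermitian.mpow_one, one_div, one_div]
  refine Real.one_sub_rpow_inv_mul_one_sub_rpow_inv_le hpq' ?_ ?_ ?_
  · exact hx1 ▸ inner_toEuclideanLin_le_of_le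
      (hA.posSemidef.mpow_le_one hA1.posSemidef hpq'.nonneg) x
  · exact hx1 ▸ inner_toEuclideanLin_le_of_le
      (hB.posSemidef.mpow_le_one hB1.posSemidef hpq'.symm.nonneg) x
  · simpa [inner_add_left, inner_smul_left] using inner_toEuclideanLin_le_of_le
      (hA.posSemidef.young_inequality_of_commute hB.posSemidef hcomm hpq') x

/-- Operator Aczél inequality: for commuting positive definite `A, B` with spectra in `(0,1)`
(i.e. `0 < A < I`, `0 < B < I`), `p, q > 1` conjugate and a unit vector `x`,
`1 - ‖(AB)^(1/2) x‖² ≥ (1 - ‖A^(p/2) x‖²)^(1/p) (1 - ‖B^(q/2) x‖²)^(1/q)`. -/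
theorem operatorAczel (p q : ℝ) (hp : 1 < p) (hq : 1 < q) (hpq : 1 / p + 1 / q = 1)
    {m : ℕ} (A B : Matrix (Fin m) (Fin m) ℝ) (hA : A.PosDef) (hB : B.PosDef)
    (hcomm : A * B = B * A) (hA1 : (1 - A).PosDef) (hB1 : (1 - B).PosDef)
    (x : EuclideanSpace ℝ (Fin m)) (hx : ‖x‖ = 1) :
    (1 - ‖Matrix.toEuclideanLin (mpow A (p / 2)) x‖ ^ 2) ^ (1 / p) *
      (1 - ‖Matrix.toEuclideanLin (mpow B (q / 2)) x‖ ^ 2) ^ (1 / q) ≤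
    1 - ‖Matrix.toEuclideanLin (mpow (A * B) (1 / 2)) x‖ ^ 2 :=
  operatorAczel_general p q hp hpq A B hA hB hcomm hA1 hB1 x hx
end
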